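/- arXiv:2006.05234 — 2 statements merged into one kernel-verified Lean document; each statement's English description precedes it below -/
import Mathlib

section
/- Let I be an ideal of a finite-dimensional Lie algebra L with I ≤ B for a subalgebra B. Then B is a weak c-ideal of L if and only if B/I is a weak c-ideal of L/I. -/
open LieAlgebra Module

section Defs

variable (F : Type*) [Field F] {L : Type*} [LieRing L] [LieAlgebra F L]

/-- `A` is an ideal of `B`, where `A` and `B` are subalgebras of `L`. -/
def IsIdealOf (A B : LieSubalgebra F L) : Prop :=
  A ≤ B ∧ ∀ x ∈ B, ∀ y ∈ A, ⁅x, y⁆ ∈ A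

/-- `C` is a subideal of `L`: there is a chain of subalgebras from `C` to `L`,
each an ideal in the next. -/
def IsSubideal (C : LieSubalgebra F L) : Prop :=
  ∃ (n : ℕ) (f : ℕ → LieSubalgebra F L),
    f 0 = C ∧ f n = ⊤ ∧ ∀ i < n, IsIdealOf F (f i) (f (i + 1))

/-- The core `B_L` of a subalgebra `B`: the largest ideal of `L` contained in `B`. -/
def lieCore (B : LieSubalgebra F L) : LieIdeal F L :=
  sSup {I : LieIdeal F L | (I : Set L) ⊆ (B : Set L)}

/-- `B` is a weak c-ideal of `L`. -/
def IsWeakCIdeal (B : LieSubalgebra F L) : Prop :=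
  ∃ C : LieSubalgebra F L, IsSubideal F C ∧ B ⊔ C = ⊤ ∧
    ((B ⊓ C : LieSubalgebra F L) : Set L) ⊆ (lieCore F B : Set L)

/-- `B` is a c-ideal of `L`. -/
def IsCIdeal (B : LieSubalgebra F L) : Prop :=
  ∃ C : LieSubalgebra F L, (∀ x : L, ∀ y ∈ C, ⁅x, y⁆ ∈ C) ∧ B ⊔ C = ⊤ ∧
    ((B ⊓ C : LieSubalgebra F L) : Set L) ⊆ (lieCore F B : Set L)

/-- `M` is a maximal subalgebra of `L`. -/
def IsMaxSubalgebra (M : LieSubalgebra F L) : Prop :=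
  M ≠ ⊤ ∧ ∀ K : LieSubalgebra F L, M < K → K = ⊤

/-- `B` is a maximal subalgebra of the subalgebra `C`. -/
def IsMaxSubalgebraIn (B C : LieSubalgebra F L) : Prop :=
  B < C ∧ ∀ K : LieSubalgebra F L, B < K → K ≤ C → K = C

/-- `C` is a maximal nilpotent subalgebra of `L`. -/
def IsMaxNilpotentSubalgebra (C : LieSubalgebra F L) : Prop :=
  LieRing.IsNilpotent C ∧
    ∀ D : LieSubalgebra F L, LieRing.IsNilpotent D → C ≤ D → C = D

/-- The quotient map `L → L ⧸ I` as a morphism of Lie algebras. -/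
def quotHom (I : LieIdeal F L) : L →ₗ⁅F⁆ L ⧸ I :=
  { (LieSubmodule.Quotient.mk' I).toLinearMap with
    map_lie' := fun {_ _} => rfl }

end Defs

/-!
Everything transfers along a surjective morphism `f` whose kernel lies in `B`. Then
`f⁻¹(f(B)) = B`, subideals push forward and pull back, `f` maps the core of `B` into the core
of `f(B)`, and `f⁻¹` maps the core of `f(B)` into the core of `B`. A supplement `C` of `B` gives
the supplement `f(C)` of `f(B)`; conversely a supplement `D` of `f(B)` gives `f⁻¹(D)`, since
`B + f⁻¹(D)` contains `ker f` and maps onto `f(B) + D`.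
-/

namespace LieSubalgebra

variable {F L L' : Type*} [Field F] [LieRing L] [LieAlgebra F L] [LieRing L'] [LieAlgebra F L']
  {f : L →ₗ⁅F⁆ L'}

lemma map_top_of_surjective (hf : Function.Surjective f) : (⊤ : LieSubalgebra F L).map f = ⊤ :=
  eq_top_iff.mpr fun y _ ↦ (mem_map _ _ _).mpr ((hf y).imp fun x hx ↦ ⟨mem_top x, hx⟩)

lemma comap_top : (⊤ : LieSubalgebra F L').comap f = ⊤ :=
  eq_top_iff.mpr fun x _ ↦ mem_top (R := F) (f x)

lemma map_comap_eq_of_surjective (hf : Function.Surjective f) (D : LieSubalgebra F L') :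
    (D.comap f).map f = D := by
  refine le_antisymm ((gc_map_comap (f := f)).l_u_le D) fun y hy ↦ ?_
  obtain ⟨x, rfl⟩ := hf y
  exact (mem_map _ _ _).mpr ⟨x, hy, rfl⟩

lemma comap_map_eq_of_ker_le {B : LieSubalgebra F L} (hker : (f.ker : Set L) ⊆ B) :
    (B.map f).comap f = B := by
  refine le_antisymm (fun x hx ↦ ?_) ((gc_map_comap (f := f)).le_u_l B)
  obtain ⟨b, hb, hbx⟩ := (mem_map _ _ _).mp hx
  have hxb : x - b ∈ f.ker := by simp [LieHom.mem_ker, hbx]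
  simpa using B.add_mem hb (hker hxb)

end LieSubalgebra

section Transfer

open LieSubalgebra

variable {F L L' : Type*} [Field F] [LieRing L] [LieAlgebra F L] [LieRing L'] [LieAlgebra F L']
  (f : L →ₗ⁅F⁆ L')

lemma IsIdealOf.map {A B : LieSubalgebra F L} (h : IsIdealOf F A B) :
    IsIdealOf F (A.map f) (B.map f) := by
  refine ⟨(gc_map_comap (f := f)).monotone_l h.1, fun x hx y hy ↦ ?_⟩
  obtain ⟨a, ha, rfl⟩ := (mem_map _ _ _).mp hx
  obtain ⟨b, hb, rfl⟩ := (mem_map _ _ _).mp hy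
  exact (mem_map _ _ _).mpr ⟨⁅a, b⁆, h.2 a ha b hb, f.map_lie a b⟩

lemma IsIdealOf.comap {A B : LieSubalgebra F L'} (h : IsIdealOf F A B) :
    IsIdealOf F (A.comap f) (B.comap f) := by
  refine ⟨(gc_map_comap (f := f)).monotone_u h.1, fun x hx y hy ↦ ?_⟩
  rw [mem_comap, f.map_lie]
  exact h.2 _ hx _ hy

variable {f} in
lemma IsSubideal.map (hf : Function.Surjective f) {C : LieSubalgebra F L}
    (h : IsSubideal F C) : IsSubideal F (C.map f) := by
  obtain ⟨n, c, hc0, hcn, hchain⟩ := h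
  exact ⟨n, fun i ↦ (c i).map f, by simp only [hc0],
    by simp only [hcn, map_top_of_surjective hf], fun i hi ↦ (hchain i hi).map f⟩

lemma IsSubideal.comap {C : LieSubalgebra F L'} (h : IsSubideal F C) :
    IsSubideal F (C.comap f) := by
  obtain ⟨n, c, hc0, hcn, hchain⟩ := h
  exact ⟨n, fun i ↦ (c i).comap f, by simp only [hc0], by simp only [hcn, comap_top],
    fun i hi ↦ (hchain i hi).comap f⟩

lemma coe_lieCore_subset (B : LieSubalgebra F L) : (lieCore F B : Set L) ⊆ B := by
  intro x hx
  change x ∈ (lieCore F B).toSubmodule at hx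
  rw [lieCore, LieSubmodule.sSup_toSubmodule] at hx
  refine sSup_le (α := Submodule F L) ?_ hx
  rintro _ ⟨J, hJ, rfl⟩ y hy
  exact hJ hy

lemma le_lieCore {B : LieSubalgebra F L} {J : LieIdeal F L} (h : (J : Set L) ⊆ B) :
    J ≤ lieCore F B :=
  le_sSup h

variable {f} in
lemma map_lieCore_le (hf : Function.Surjective f) (B : LieSubalgebra F L) :
    (lieCore F B).map f ≤ lieCore F (B.map f) := by
  refine le_lieCore fun y hy ↦ ?_
  obtain ⟨x, rfl⟩ := LieIdeal.mem_map_of_surjective hf hy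
  exact (mem_map _ _ _).mpr ⟨x, coe_lieCore_subset B x.2, rfl⟩

variable {f} in
lemma comap_lieCore_map_le {B : LieSubalgebra F L} (hker : (f.ker : Set L) ⊆ B) :
    (lieCore F (B.map f)).comap f ≤ lieCore F B := by
  refine le_lieCore fun x hx ↦ ?_
  have hfx : f x ∈ B.map f := coe_lieCore_subset _ (show f x ∈ lieCore F (B.map f) from hx)
  rwa [← comap_map_eq_of_ker_le hker]

variable {f} (hf : Function.Surjective f) {B : LieSubalgebra F L} (hker : (f.ker : Set L) ⊆ B)
include hf hker

lemma IsWeakCIdeal.map (h : IsWeakCIdeal F B) : IsWeakCIdeal F (B.map f) := by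
  obtain ⟨C, hC, hsup, hinf⟩ := h
  refine ⟨C.map f, hC.map hf, ?_, fun y hy ↦ ?_⟩
  · rw [← (gc_map_comap (f := f)).l_sup, hsup, map_top_of_surjective hf]
  obtain ⟨hyB, hyC⟩ := (mem_inf _ _ _).mp hy
  obtain ⟨c, hc, rfl⟩ := (mem_map _ _ _).mp hyC
  have hcB : c ∈ B := by rwa [← comap_map_eq_of_ker_le hker]
  exact map_lieCore_le hf B (LieIdeal.mem_map (hinf ((mem_inf _ _ _).mpr ⟨hcB, hc⟩)))

lemma IsWeakCIdeal.of_map (h : IsWeakCIdeal F (B.map f)) : IsWeakCIdeal F B := by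
  obtain ⟨D, hD, hsup, hinf⟩ := h
  refine ⟨D.comap f, hD.comap f, ?_, fun x hx ↦ ?_⟩
  · have hker' : (f.ker : Set L) ⊆ (B ⊔ D.comap f : LieSubalgebra F L) :=
      hker.trans (SetLike.coe_subset_coe.mpr le_sup_left)
    calc B ⊔ D.comap f = ((B ⊔ D.comap f).map f).comap f := (comap_map_eq_of_ker_le hker').symm
      _ = (B.map f ⊔ D).comap f := by
        rw [(gc_map_comap (f := f)).l_sup, map_comap_eq_of_surjective hf]
      _ = ⊤ := by rw [hsup, comap_top]
  obtain ⟨hxB, hxD⟩ := (mem_inf _ _ _).mp hx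
  have hfx : f x ∈ B.map f ⊓ D :=
    (mem_inf _ _ _).mpr ⟨(mem_map _ _ _).mpr ⟨x, hxB, rfl⟩, hxD⟩
  exact comap_lieCore_map_le hker (hinf hfx)

theorem isWeakCIdeal_map_iff : IsWeakCIdeal F (B.map f) ↔ IsWeakCIdeal F B :=
  ⟨.of_map hf hker, .map hf hker⟩

end Transfer

lemma ker_quotHom {F L : Type*} [Field F] [LieRing L] [LieAlgebra F L] (I : LieIdeal F L) :
    (quotHom F I).ker = I := by
  ext x
  exact LieSubmodule.Quotient.mk_eq_zero (N := I)

theorem isWeakCIdeal_iff_quotient_general {F : Type*} [Field F] {L : Type*} [LieRing L] [LieAlgebra F L]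
    (I : LieIdeal F L) (B : LieSubalgebra F L)
    (hIB : (I : Set L) ⊆ (B : Set L)) :
    IsWeakCIdeal F B ↔ IsWeakCIdeal F (B.map (quotHom F I)) :=
  (isWeakCIdeal_map_iff (LieSubmodule.Quotient.surjective_mk' I) (by rwa [ker_quotHom])).symm

theorem isWeakCIdeal_iff_quotient {F : Type*} [Field F] {L : Type*} [LieRing L] [LieAlgebra F L]
    [FiniteDimensional F L] (I : LieIdeal F L) (B : LieSubalgebra F L)
    (hIB : (I : Set L) ⊆ (B : Set L)) :
    IsWeakCIdeal F B ↔ IsWeakCIdeal F (B.map (quotHom F I)) :=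
  isWeakCIdeal_iff_quotient_general I B hIB
end

section
/- Let L be a finite-dimensional Lie algebra over any field. A one-dimensional subalgebra Fx of L is a weak c-ideal of L if and only if it is a c-ideal of L. -/
open LieAlgebra Module

/-! A subideal `C ≠ L` lies in a proper ideal `D` of `L`: the last proper term of its chain.
Since `L = B + C ≤ B + D`, the line `B` is not inside `D`, so it meets `D` trivially and `D`
is a complement witnessing that `B` is a c-ideal. -/

section

variable {F : Type*} [Field F] {L : Type*} [LieRing L] [LieAlgebra F L]

theorem isIdealOf_top_iff (D : LieSubalgebra F L) :
    IsIdealOf F D ⊤ ↔ ∀ x : L, ∀ y ∈ D, ⁅x, y⁆ ∈ D :=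
  ⟨fun h x => h.2 x trivial, fun h => ⟨le_top, fun x _ => h x⟩⟩

theorem isSubideal_of_forall_lie_mem {C : LieSubalgebra F L} (hC : ∀ x : L, ∀ y ∈ C, ⁅x, y⁆ ∈ C) :
    IsSubideal F C := by
  refine ⟨1, fun j => if j = 0 then C else ⊤, rfl, rfl, fun i hi => ?_⟩
  obtain rfl : i = 0 := Nat.lt_one_iff.mp hi
  exact (isIdealOf_top_iff C).mpr hC

theorem IsSubideal.exists_ideal_le_ne_top {C : LieSubalgebra F L} (hC : IsSubideal F C)
    (hCtop : C ≠ ⊤) :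
    ∃ D : LieSubalgebra F L, (∀ x : L, ∀ y ∈ D, ⁅x, y⁆ ∈ D) ∧ C ≤ D ∧ D ≠ ⊤ := by
  obtain ⟨n, f, rfl, hfn, hchain⟩ := hC
  induction n generalizing f with
  | zero => exact absurd hfn hCtop
  | succ n ih =>
    have hf01 := hchain 0 n.succ_pos
    by_cases hf1 : f 1 = ⊤
    · rw [hf1, isIdealOf_top_iff] at hf01
      exact ⟨f 0, hf01, le_rfl, hCtop⟩
    · obtain ⟨D, hD, hf1D, hDtop⟩ :=
        ih (fun i => f (i + 1)) hf1 hfn fun i hi => hchain (i + 1) (by omega)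
      exact ⟨D, hD, hf01.1.trans hf1D, hDtop⟩

theorem LieSubalgebra.inf_eq_bot_of_finrank_eq_one {B D : LieSubalgebra F L}
    (hB : finrank F B = 1) (hBD : ¬ B ≤ D) : B ⊓ D = ⊥ := by
  refine (LieSubalgebra.eq_bot_iff _).mpr fun y ⟨hyB, hyD⟩ => by_contra fun hy => hBD ?_
  intro b hb
  obtain ⟨c, hc⟩ := (finrank_eq_one_iff_of_nonzero' (⟨y, hyB⟩ : B)
    fun h => hy (congrArg Subtype.val h)).mp hB ⟨b, hb⟩
  rw [← show c • y = b from congrArg Subtype.val hc]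
  exact D.smul_mem c hyD

end

theorem one_dim_weakCIdeal_iff_cIdeal_general {F : Type*} [Field F] {L : Type*} [LieRing L] [LieAlgebra F L]
    (B : LieSubalgebra F L)
    (hB : Module.finrank F B = 1) :
    IsWeakCIdeal F B ↔ IsCIdeal F B := by
  refine ⟨fun ⟨C, hC, hsup, hinf⟩ => ?_, fun ⟨C, hC, hsup, hinf⟩ =>
    ⟨C, isSubideal_of_forall_lie_mem hC, hsup, hinf⟩⟩
  by_cases hCtop : C = ⊤
  · subst hCtop
    exact ⟨⊤, fun _ _ _ => trivial, hsup, hinf⟩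
  obtain ⟨D, hD, hCD, hDtop⟩ := hC.exists_ideal_le_ne_top hCtop
  have hBD_sup : B ⊔ D = ⊤ := top_unique (hsup ▸ sup_le_sup_left hCD B)
  have hBD : ¬ B ≤ D := fun h => hDtop (by rwa [sup_eq_right.mpr h] at hBD_sup)
  refine ⟨D, hD, hBD_sup, ?_⟩
  rw [LieSubalgebra.inf_eq_bot_of_finrank_eq_one hB hBD, LieSubalgebra.bot_coe,
    Set.singleton_subset_iff]
  exact (lieCore F B).zero_mem

theorem one_dim_weakCIdeal_iff_cIdeal {F : Type*} [Field F] {L : Type*} [LieRing L] [LieAlgebra F L]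
    [FiniteDimensional F L] (B : LieSubalgebra F L)
    (hB : Module.finrank F B = 1) :
    IsWeakCIdeal F B ↔ IsCIdeal F B :=
  one_dim_weakCIdeal_iff_cIdeal_general B hB
end
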